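/- arXiv:2509.07232 — 3 statements merged into one kernel-verified Lean document; each statement's English description precedes it below -/
import Mathlib

section
/- A function C : [0,1]² → [0,1] is a bivariate copula if and only if there exists a family (h_v)_{v∈[0,1]} of measurable functions h_v : [0,1] → [0,1] such that (i) C(u,v) = ∫₀ᵘ h_v(t) dt for all (u,v) ∈ [0,1]², (ii) ∫₀¹ h_v(t) dt = v for all v ∈ [0,1], and (iii) for every t ∈ [0,1] the map v ↦ h_v(t) is non-decreasing. -/
/-!
For a copula `C`, each section `u ↦ C(u, v)` is monotone and 1-Lipschitz on `[0, 1]`, hence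
absolutely continuous, so `C(u, v) = ∫₀ᵘ ∂₁C(t, v) dt` with `∂₁C ∈ [0, 1]`. The 2-increasing
property makes `v ↦ ∂₁C(t, v)` non-decreasing only for almost every `t`, with a null set
depending on the pair of values of `v` compared. Taking the supremum of `∂₁C(t, q)` over the
countably many rationals `q ∈ [0, v]` gives a version that is monotone for every `t`; it lies
below `∂₁C(·, v)` almost everywhere and above every `∂₁C(·, q)`, so the 1-Lipschitz continuity
of `C` in `v` shows that it still integrates to `C`.

Conversely, the `C`-volume of a rectangle `[u₁, u₂] × [v₁, v₂]` is `∫_{u₁}^{u₂} (h_{v₂} - h_{v₁})`,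
which is nonnegative by monotonicity in `v`.
-/

open MeasureTheory Set

noncomputable section

def IsCopula (C : ℝ → ℝ → ℝ) : Prop :=
  (∀ u ∈ Icc (0:ℝ) 1, ∀ v ∈ Icc (0:ℝ) 1, C u v ∈ Icc (0:ℝ) 1) ∧
  (∀ u ∈ Icc (0:ℝ) 1, C u 0 = 0 ∧ C u 1 = u) ∧
  (∀ v ∈ Icc (0:ℝ) 1, C 0 v = 0 ∧ C 1 v = v) ∧
  (∀ u₁ ∈ Icc (0:ℝ) 1, ∀ u₂ ∈ Icc (0:ℝ) 1, ∀ v₁ ∈ Icc (0:ℝ) 1, ∀ v₂ ∈ Icc (0:ℝ) 1,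
    u₁ ≤ u₂ → v₁ ≤ v₂ → 0 ≤ C u₂ v₂ - C u₁ v₂ - C u₂ v₁ + C u₁ v₁)

/-- The (a.e. defined) partial derivative of `C` with respect to its first argument. -/
def d1 (C : ℝ → ℝ → ℝ) (t v : ℝ) : ℝ := deriv (fun s => C s v) t

/-- Chatterjee's rank correlation. -/
def xi (C : ℝ → ℝ → ℝ) : ℝ :=
  6 * (∫ v in (0:ℝ)..1, ∫ t in (0:ℝ)..1, (d1 C t v) ^ 2) - 2

/-- Spearman's footrule. -/
def psi (C : ℝ → ℝ → ℝ) : ℝ :=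
  6 * (∫ v in (0:ℝ)..1, C v v) - 2

/-- Stochastically increasing: for each `v`, `t ↦ ∂₁C(t,v)` agrees a.e. on `[0,1]`
with a non-increasing function. -/
def IsSI (C : ℝ → ℝ → ℝ) : Prop :=
  ∀ v ∈ Icc (0:ℝ) 1, ∃ g : ℝ → ℝ, AntitoneOn g (Icc (0:ℝ) 1) ∧
    (∀ᵐ t ∂(volume.restrict (Icc (0:ℝ) 1)), d1 C t v = g t)

section Clamp

variable {a b : ℝ} {f : ℝ → ℝ}

theorem MonotoneOn.comp_projIcc (h : a ≤ b) (hf : MonotoneOn f (Icc a b)) :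
    Monotone fun s => f (projIcc a b h s) := fun _ _ hxy =>
  hf (projIcc a b h _).2 (projIcc a b h _).2 (monotone_projIcc h hxy)

theorem LipschitzOnWith.comp_projIcc {K : NNReal} (h : a ≤ b)
    (hf : LipschitzOnWith K f (Icc a b)) : LipschitzWith K fun s => f (projIcc a b h s) := by
  have := hf.to_restrict.comp (LipschitzWith.projIcc h)
  rwa [mul_one] at this

end Clamp

theorem intervalIntegrable_of_mem_Icc {f : ℝ → ℝ} {a b m M : ℝ} (hf : Measurable f)
    (hb : ∀ t ∈ uIcc a b, f t ∈ Icc m M) : IntervalIntegrable f volume a b := by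
  refine IntegrableOn.intervalIntegrable ?_
  refine Measure.integrableOn_of_bounded (M := max |m| |M|) isCompact_uIcc.measure_lt_top.ne
    hf.aestronglyMeasurable ?_
  filter_upwards [ae_restrict_mem measurableSet_uIcc] with t ht
  exact abs_le_max_abs_abs (hb t ht).1 (hb t ht).2

theorem intervalIntegral.integral_mem_Icc_sub {f : ℝ → ℝ} {a b : ℝ} (hab : a ≤ b)
    (hf : Measurable f) (hb : ∀ t ∈ Icc a b, f t ∈ Icc (0:ℝ) 1) :
    ∫ t in a..b, f t ∈ Icc 0 (b - a) := by
  have hint : IntervalIntegrable f volume a b :=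
    intervalIntegrable_of_mem_Icc hf fun t ht => hb t (by rwa [uIcc_of_le hab] at ht)
  refine ⟨integral_nonneg hab fun t ht => (hb t ht).1, ?_⟩
  simpa using integral_mono_on hab hint intervalIntegrable_const fun t ht => (hb t ht).2

theorem ae_deriv_le_of_monotone_sub {f g : ℝ → ℝ} {Kf Kg : NNReal} (hf : LipschitzWith Kf f)
    (hg : LipschitzWith Kg g) (hfg : Monotone fun x => g x - f x) :
    deriv f ≤ᵐ[volume] deriv g := by
  filter_upwards [hf.ae_differentiableAt_of_real, hg.ae_differentiableAt_of_real]
    with t hft hgt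
  have := hfg.deriv_nonneg (x := t)
  rw [deriv_fun_sub hgt hft] at this
  exact sub_nonneg.1 this

theorem exists_rat_mem_Icc_le_add {v ε : ℝ} (hv : 0 ≤ v) (hε : 0 < ε) :
    ∃ q : ℚ, (q:ℝ) ∈ Icc 0 v ∧ v ≤ q + ε := by
  rcases lt_or_ge v ε with hvε | hεv
  · exact ⟨0, by simpa using hv, by simpa using hvε.le⟩
  · obtain ⟨q, hvq, hqv⟩ := exists_rat_btwn (sub_lt_self v hε)
    exact ⟨q, ⟨by linarith, hqv.le⟩, by linarith⟩

section RatSup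

variable {α : Type*} {D : ℝ → α → ℝ} {v : ℝ}

def ratSup (D : ℝ → α → ℝ) (v : ℝ) (x : α) : ℝ := ⨆ q : {q : ℚ // (q:ℝ) ∈ Icc 0 v}, D q x

theorem measurable_ratSup [MeasurableSpace α] (hD : ∀ v, Measurable (D v)) (v : ℝ) :
    Measurable (ratSup D v) :=
  Measurable.iSup fun q => hD q

theorem le_ratSup (hD : ∀ v ∈ Icc (0:ℝ) 1, ∀ x, D v x ∈ Icc (0:ℝ) 1) (hv : v ≤ 1) {q : ℚ}
    (hq : (q:ℝ) ∈ Icc 0 v) (x : α) : D q x ≤ ratSup D v x := by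
  refine le_ciSup (f := fun q : {q : ℚ // (q:ℝ) ∈ Icc 0 v} => D q x) ⟨1, ?_⟩ ⟨q, hq⟩
  rintro _ ⟨r, rfl⟩
  exact (hD r ⟨r.2.1, r.2.2.trans hv⟩ x).2

theorem ratSup_le {c : ℝ} (hv : 0 ≤ v) {x : α} (h : ∀ q : ℚ, (q:ℝ) ∈ Icc 0 v → D q x ≤ c) :
    ratSup D v x ≤ c :=
  haveI : Nonempty {q : ℚ // (q:ℝ) ∈ Icc 0 v} := ⟨⟨0, by simpa using hv⟩⟩
  ciSup_le fun q => h q q.2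

theorem ratSup_mem_Icc (hD : ∀ v ∈ Icc (0:ℝ) 1, ∀ x, D v x ∈ Icc (0:ℝ) 1)
    (hv : v ∈ Icc (0:ℝ) 1) (x : α) : ratSup D v x ∈ Icc (0:ℝ) 1 :=
  ⟨(hD 0 (left_mem_Icc.2 zero_le_one) x).1.trans
      (by simpa using le_ratSup hD hv.2 (q := 0) (by simpa using hv.1) x),
    ratSup_le hv.1 fun q hq => (hD q ⟨hq.1, hq.2.trans hv.2⟩ x).2⟩

theorem monotoneOn_ratSup (hD : ∀ v ∈ Icc (0:ℝ) 1, ∀ x, D v x ∈ Icc (0:ℝ) 1) (x : α) :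
    MonotoneOn (ratSup D · x) (Icc 0 1) := fun _ hv _ hw hvw =>
  ratSup_le hv.1 fun _ hq => le_ratSup hD hw.2 ⟨hq.1, hq.2.trans hvw⟩ x

theorem ratSup_le_ae {_ : MeasurableSpace α} {μ : Measure α}
    (hmono : ∀ q : ℚ, (q:ℝ) ∈ Icc 0 v → D q ≤ᵐ[μ] D v) (hv : 0 ≤ v) :
    ratSup D v ≤ᵐ[μ] D v := by
  have hall : ∀ᵐ x ∂μ, ∀ q : {q : ℚ // (q:ℝ) ∈ Icc 0 v}, D q x ≤ D v x :=
    ae_all_iff.2 fun q => hmono q q.2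
  filter_upwards [hall] with x hx
  exact ratSup_le hv fun q hq => hx ⟨q, hq⟩

end RatSup

def clampedSection (C : ℝ → ℝ → ℝ) (v : ℝ) (s : ℝ) : ℝ := C (projIcc 0 1 zero_le_one s) v

def monotonePartialDeriv (C : ℝ → ℝ → ℝ) : ℝ → ℝ → ℝ :=
  ratSup fun v => deriv (clampedSection C v)

theorem measurable_monotonePartialDeriv (C : ℝ → ℝ → ℝ) (v : ℝ) :
    Measurable (monotonePartialDeriv C v) :=
  measurable_ratSup (fun _ => measurable_deriv _) v

section Copula

variable {C : ℝ → ℝ → ℝ} {u v w : ℝ}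

theorem IsCopula.monotoneOn_left (hC : IsCopula C) (hv : v ∈ Icc (0:ℝ) 1) :
    MonotoneOn (C · v) (Icc 0 1) := by
  intro a ha b hb hab
  have := hC.2.2.2 a ha b hb 0 (left_mem_Icc.2 zero_le_one) v hv hab hv.1
  linarith [(hC.2.1 a ha).1, (hC.2.1 b hb).1]

theorem IsCopula.sub_le_sub_left (hC : IsCopula C) (hv : v ∈ Icc (0:ℝ) 1) {a b : ℝ}
    (ha : a ∈ Icc (0:ℝ) 1) (hb : b ∈ Icc (0:ℝ) 1) (hab : a ≤ b) : C b v - C a v ≤ b - a := by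
  have := hC.2.2.2 a ha b hb v hv 1 (right_mem_Icc.2 zero_le_one) hab hv.2
  linarith [(hC.2.1 a ha).2, (hC.2.1 b hb).2]

theorem IsCopula.sub_le_sub_right (hC : IsCopula C) (hu : u ∈ Icc (0:ℝ) 1)
    (hv : v ∈ Icc (0:ℝ) 1) (hw : w ∈ Icc (0:ℝ) 1) (hvw : v ≤ w) : C u w - C u v ≤ w - v := by
  have := hC.2.2.2 u hu 1 (right_mem_Icc.2 zero_le_one) v hv w hw hu.2 hvw
  linarith [(hC.2.2.1 v hv).2, (hC.2.2.1 w hw).2]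

theorem IsCopula.lipschitzOnWith_left (hC : IsCopula C) (hv : v ∈ Icc (0:ℝ) 1) :
    LipschitzOnWith 1 (C · v) (Icc 0 1) := by
  refine LipschitzOnWith.of_le_add fun a ha b hb => ?_
  rcases le_total a b with hab | hba
  · linarith [hC.monotoneOn_left hv ha hb hab, dist_nonneg (x := a) (y := b)]
  · linarith [hC.sub_le_sub_left hv hb ha hba, Real.dist_eq a b, le_abs_self (a - b)]

theorem IsCopula.monotoneOn_sub_left (hC : IsCopula C) (hv : v ∈ Icc (0:ℝ) 1)
    (hw : w ∈ Icc (0:ℝ) 1) (hvw : v ≤ w) : MonotoneOn (fun s => C s w - C s v) (Icc 0 1) := by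
  intro a ha b hb hab
  have := hC.2.2.2 a ha b hb v hv w hw hab hvw
  dsimp only
  linarith

theorem IsCopula.lipschitzWith_clampedSection (hC : IsCopula C) (hv : v ∈ Icc (0:ℝ) 1) :
    LipschitzWith 1 (clampedSection C v) :=
  (hC.lipschitzOnWith_left hv).comp_projIcc zero_le_one

theorem IsCopula.deriv_clampedSection_mem_Icc (hC : IsCopula C) (hv : v ∈ Icc (0:ℝ) 1)
    (t : ℝ) : deriv (clampedSection C v) t ∈ Icc (0:ℝ) 1 := by
  refine ⟨((hC.monotoneOn_left hv).comp_projIcc zero_le_one).deriv_nonneg, ?_⟩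
  have := norm_deriv_le_of_lipschitz (x₀ := t) (hC.lipschitzWith_clampedSection hv)
  exact (le_abs_self _).trans (by simpa using this)

theorem IsCopula.integral_deriv_clampedSection (hC : IsCopula C) (hu : u ∈ Icc (0:ℝ) 1)
    (hv : v ∈ Icc (0:ℝ) 1) : ∫ t in (0:ℝ)..u, deriv (clampedSection C v) t = C u v := by
  rw [((hC.lipschitzWith_clampedSection hv).lipschitzOnWith).absolutelyContinuousOnInterval
    |>.integral_deriv_eq_sub]
  simp [clampedSection, projIcc_of_mem _ hu, (hC.2.2.1 v hv).1]

theorem IsCopula.deriv_clampedSection_le_ae (hC : IsCopula C) (hv : v ∈ Icc (0:ℝ) 1)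
    (hw : w ∈ Icc (0:ℝ) 1) (hvw : v ≤ w) :
    deriv (clampedSection C v) ≤ᵐ[volume] deriv (clampedSection C w) :=
  ae_deriv_le_of_monotone_sub (hC.lipschitzWith_clampedSection hv)
    (hC.lipschitzWith_clampedSection hw)
    ((hC.monotoneOn_sub_left hv hw hvw).comp_projIcc zero_le_one)

theorem IsCopula.monotonePartialDeriv_mem_Icc (hC : IsCopula C) (hv : v ∈ Icc (0:ℝ) 1)
    (t : ℝ) : monotonePartialDeriv C v t ∈ Icc (0:ℝ) 1 :=
  ratSup_mem_Icc (fun _ hw => hC.deriv_clampedSection_mem_Icc hw) hv t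

theorem IsCopula.monotoneOn_monotonePartialDeriv (hC : IsCopula C) (t : ℝ) :
    MonotoneOn (monotonePartialDeriv C · t) (Icc 0 1) :=
  monotoneOn_ratSup (fun _ hw => hC.deriv_clampedSection_mem_Icc hw) t

theorem IsCopula.eq_integral_monotonePartialDeriv (hC : IsCopula C) (hu : u ∈ Icc (0:ℝ) 1)
    (hv : v ∈ Icc (0:ℝ) 1) : C u v = ∫ t in (0:ℝ)..u, monotonePartialDeriv C v t := by
  have hD := fun w (hw : w ∈ Icc (0:ℝ) 1) => hC.deriv_clampedSection_mem_Icc hw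
  have hint : IntervalIntegrable (monotonePartialDeriv C v) volume 0 u :=
    intervalIntegrable_of_mem_Icc (measurable_monotonePartialDeriv C v)
      fun t _ => hC.monotonePartialDeriv_mem_Icc hv t
  have hint_deriv : ∀ w ∈ Icc (0:ℝ) 1, IntervalIntegrable (deriv (clampedSection C w)) volume 0 u :=
    fun w hw => intervalIntegrable_of_mem_Icc (measurable_deriv _) fun t _ => hD w hw t
  have ge_rat : ∀ q : ℚ, (q:ℝ) ∈ Icc 0 v → C u q ≤ ∫ t in (0:ℝ)..u, monotonePartialDeriv C v t := by
    intro q hq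
    have hqI : (q:ℝ) ∈ Icc (0:ℝ) 1 := ⟨hq.1, hq.2.trans hv.2⟩
    rw [← hC.integral_deriv_clampedSection hu hqI]
    exact intervalIntegral.integral_mono hu.1 (hint_deriv q hqI) hint
      fun t => le_ratSup hD hv.2 hq t
  refine le_antisymm (le_of_forall_pos_le_add fun ε hε => ?_) ?_
  · obtain ⟨q, hq, hvq⟩ := exists_rat_mem_Icc_le_add hv.1 hε
    linarith [ge_rat q hq, hC.sub_le_sub_right hu ⟨hq.1, hq.2.trans hv.2⟩ hv hq.2]
  · rw [← hC.integral_deriv_clampedSection hu hv]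
    refine intervalIntegral.integral_mono_ae hu.1 hint (hint_deriv v hv) ?_
    exact ratSup_le_ae (fun q hq => hC.deriv_clampedSection_le_ae ⟨hq.1, hq.2.trans hv.2⟩ hv hq.2)
      hv.1

end Copula

theorem isCopula_of_eq_integral {C h : ℝ → ℝ → ℝ}
    (hmeas : ∀ v ∈ Icc (0:ℝ) 1, Measurable (h v))
    (hrange : ∀ v ∈ Icc (0:ℝ) 1, ∀ t ∈ Icc (0:ℝ) 1, h v t ∈ Icc (0:ℝ) 1)
    (hrepr : ∀ u ∈ Icc (0:ℝ) 1, ∀ v ∈ Icc (0:ℝ) 1, C u v = ∫ t in (0:ℝ)..u, h v t)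
    (htotal : ∀ v ∈ Icc (0:ℝ) 1, ∫ t in (0:ℝ)..1, h v t = v)
    (hmono : ∀ t ∈ Icc (0:ℝ) 1, MonotoneOn (fun v => h v t) (Icc (0:ℝ) 1)) : IsCopula C := by
  have h0 : (0:ℝ) ∈ Icc (0:ℝ) 1 := left_mem_Icc.2 zero_le_one
  have h1 : (1:ℝ) ∈ Icc (0:ℝ) 1 := right_mem_Icc.2 zero_le_one
  have hint : ∀ v ∈ Icc (0:ℝ) 1, ∀ a ∈ Icc (0:ℝ) 1, ∀ b ∈ Icc (0:ℝ) 1,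
      IntervalIntegrable (h v) volume a b := fun v hv a ha b hb =>
    intervalIntegrable_of_mem_Icc (hmeas v hv) fun t ht => hrange v hv t (uIcc_subset_Icc ha hb ht)
  have hbound : ∀ v ∈ Icc (0:ℝ) 1, ∀ a ∈ Icc (0:ℝ) 1, ∀ b ∈ Icc (0:ℝ) 1, a ≤ b →
      ∫ t in a..b, h v t ∈ Icc 0 (b - a) := fun v hv a ha b hb hab =>
    intervalIntegral.integral_mem_Icc_sub hab (hmeas v hv)
      fun t ht => hrange v hv t ⟨ha.1.trans ht.1, ht.2.trans hb.2⟩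
  have hsplit : ∀ v ∈ Icc (0:ℝ) 1, ∀ u ∈ Icc (0:ℝ) 1,
      (∫ t in (0:ℝ)..u, h v t) + ∫ t in u..1, h v t = v := fun v hv u hu => by
    rw [intervalIntegral.integral_add_adjacent_intervals (hint v hv 0 h0 u hu)
      (hint v hv u hu 1 h1), htotal v hv]
  refine ⟨fun u hu v hv => ?_, fun u hu => ⟨?_, ?_⟩, fun v hv => ⟨?_, ?_⟩, ?_⟩
  · rw [hrepr u hu v hv]
    have := hbound v hv 0 h0 u hu hu.1
    exact ⟨this.1, by linarith [this.2, hu.2]⟩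
  · rw [hrepr u hu 0 h0]
    linarith [hsplit 0 h0 u hu, (hbound 0 h0 0 h0 u hu hu.1).1, (hbound 0 h0 u hu 1 h1 hu.2).1]
  · rw [hrepr u hu 1 h1]
    linarith [hsplit 1 h1 u hu, (hbound 1 h1 0 h0 u hu hu.1).2, (hbound 1 h1 u hu 1 h1 hu.2).2]
  · rw [hrepr 0 h0 v hv, intervalIntegral.integral_same]
  · rw [hrepr 1 h1 v hv, htotal v hv]
  · intro u₁ hu₁ u₂ hu₂ v₁ hv₁ v₂ hv₂ hu hv
    have hdiff : ∀ v ∈ Icc (0:ℝ) 1, C u₂ v - C u₁ v = ∫ t in u₁..u₂, h v t := fun v hv' => by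
      rw [hrepr u₂ hu₂ v hv', hrepr u₁ hu₁ v hv', intervalIntegral.integral_interval_sub_left
        (hint v hv' 0 h0 u₂ hu₂) (hint v hv' 0 h0 u₁ hu₁)]
    have hnonneg : 0 ≤ ∫ t in u₁..u₂, (h v₂ t - h v₁ t) :=
      intervalIntegral.integral_nonneg hu fun t ht =>
        sub_nonneg.2 (hmono t ⟨hu₁.1.trans ht.1, ht.2.trans hu₂.2⟩ hv₁ hv₂ hv)
    rw [intervalIntegral.integral_sub (hint v₂ hv₂ u₁ hu₁ u₂ hu₂) (hint v₁ hv₁ u₁ hu₁ u₂ hu₂)]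
      at hnonneg
    linarith [hdiff v₁ hv₁, hdiff v₂ hv₂]

/-- A function `C` is a bivariate copula if and only if there is a family
`h v` of measurable functions `[0,1] → [0,1]` with `C u v = ∫ t in 0..u, h v t`,
`∫ t in 0..1, h v t = v`, and `v ↦ h v t` non-decreasing. -/
theorem copula_characterization (C : ℝ → ℝ → ℝ) :
    IsCopula C ↔
      ∃ h : ℝ → ℝ → ℝ,
        (∀ v ∈ Icc (0:ℝ) 1, Measurable (h v)) ∧
        (∀ v ∈ Icc (0:ℝ) 1, ∀ t ∈ Icc (0:ℝ) 1, h v t ∈ Icc (0:ℝ) 1) ∧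
        (∀ u ∈ Icc (0:ℝ) 1, ∀ v ∈ Icc (0:ℝ) 1, C u v = ∫ t in (0:ℝ)..u, h v t) ∧
        (∀ v ∈ Icc (0:ℝ) 1, (∫ t in (0:ℝ)..1, h v t) = v) ∧
        (∀ t ∈ Icc (0:ℝ) 1, MonotoneOn (fun v => h v t) (Icc (0:ℝ) 1)) := by
  refine ⟨fun hC => ⟨monotonePartialDeriv C, fun v _ => measurable_monotonePartialDeriv C v,
    fun v hv t _ => hC.monotonePartialDeriv_mem_Icc hv t,
    fun u hu v hv => hC.eq_integral_monotonePartialDeriv hu hv, fun v hv => ?_,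
    fun t _ => hC.monotoneOn_monotonePartialDeriv t⟩, ?_⟩
  · rw [← hC.eq_integral_monotonePartialDeriv (right_mem_Icc.2 zero_le_one) hv]
    exact (hC.2.2.1 v hv).2
  · rintro ⟨h, hmeas, hrange, hrepr, htotal, hmono⟩
    exact isCopula_of_eq_integral hmeas hrange hrepr htotal hmono
end
end

section
/- For every bivariate copula C it holds that 0 ≤ ξ(C) and ψ(C) ≤ √(ξ(C)). -/
open MeasureTheory Set

noncomputable section

/-! For fixed `v`, view the slice `t ↦ ∂₁C(t, v)` as a random variable on the uniform probability
space `(0, 1]`. It takes values in `[0, 1]`, has mean `C(1, v) = v`, and its mean against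
`𝟙{t ≤ v}` is `C(v, v)`; so `C(v, v) - v²` is its covariance with `𝟙{t ≤ v}`, a variable of
variance `v(1 - v)`. Its variance is `∫ ∂₁C(t, v)² dt - v²`, which integrates over `v` to `ξ/6`;
in particular `ξ ≥ 0`. Cauchy–Schwarz for each covariance and then once more in `v` gives
`ψ/6 ≤ √(1/6) √(ξ/6)`. -/

open ProbabilityTheory
open scoped ENNReal

theorem integral_mul_le_sqrt_integral_sq_mul_sqrt_integral_sq {α : Type*} [MeasurableSpace α]
    {μ : Measure α} {f g : α → ℝ} (hf : MemLp f 2 μ) (hg : MemLp g 2 μ) :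
    ∫ a, f a * g a ∂μ ≤ √(∫ a, f a ^ 2 ∂μ) * √(∫ a, g a ^ 2 ∂μ) := by
  have h2 : ENNReal.ofReal 2 = 2 := by norm_num
  have hnorm : ∀ x : ℝ, ‖x‖ ^ (2 : ℝ) = x ^ 2 := fun x => by
    rw [Real.rpow_two, Real.norm_eq_abs, sq_abs]
  calc ∫ a, f a * g a ∂μ ≤ ∫ a, ‖f a‖ * ‖g a‖ ∂μ :=
        integral_mono (hf.integrable_mul hg) (hf.norm.integrable_mul hg.norm)
          fun a => by simpa [abs_mul] using le_abs_self (f a * g a)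
    _ ≤ (∫ a, ‖f a‖ ^ (2 : ℝ) ∂μ) ^ (1 / (2 : ℝ)) * (∫ a, ‖g a‖ ^ (2 : ℝ) ∂μ) ^ (1 / (2 : ℝ)) :=
        integral_mul_norm_le_Lp_mul_Lq Real.HolderConjugate.two_two (h2 ▸ hf) (h2 ▸ hg)
    _ = √(∫ a, f a ^ 2 ∂μ) * √(∫ a, g a ^ 2 ∂μ) := by
        simp only [hnorm, one_div, Real.sqrt_eq_rpow]

theorem covariance_le_sqrt_variance_mul_sqrt_variance {Ω : Type*} [MeasurableSpace Ω]
    {μ : Measure Ω} [IsFiniteMeasure μ] {X Y : Ω → ℝ} (hX : MemLp X 2 μ) (hY : MemLp Y 2 μ) :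
    cov[X, Y; μ] ≤ √Var[X; μ] * √Var[Y; μ] := by
  rw [covariance, variance_eq_integral hX.aemeasurable, variance_eq_integral hY.aemeasurable]
  exact integral_mul_le_sqrt_integral_sq_mul_sqrt_integral_sq
    (hX.sub (memLp_const _)) (hY.sub (memLp_const _))

theorem integral_le_sqrt_integral_mul_sqrt_integral {α : Type*} [MeasurableSpace α]
    {μ : Measure α} {f a b : α → ℝ} (hf : Integrable f μ) (ha : Integrable a μ)
    (hb : Integrable b μ) (ha₀ : 0 ≤ a) (hb₀ : 0 ≤ b) (h : ∀ᵐ x ∂μ, f x ≤ √(a x) * √(b x)) :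
    ∫ x, f x ∂μ ≤ √(∫ x, a x ∂μ) * √(∫ x, b x ∂μ) := by
  have hsqrt : ∀ {g : α → ℝ}, Integrable g μ → 0 ≤ g → MemLp (fun x => √(g x)) 2 μ :=
    fun hg hg₀ => (memLp_two_iff_integrable_sq
      (Real.continuous_sqrt.comp_aestronglyMeasurable hg.aestronglyMeasurable)).2
      (by simpa only [Real.sq_sqrt (hg₀ _)] using hg)
  calc ∫ x, f x ∂μ ≤ ∫ x, √(a x) * √(b x) ∂μ :=
        integral_mono_ae hf ((hsqrt ha ha₀).integrable_mul (hsqrt hb hb₀)) h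
    _ ≤ √(∫ x, √(a x) ^ 2 ∂μ) * √(∫ x, √(b x) ^ 2 ∂μ) :=
        integral_mul_le_sqrt_integral_sq_mul_sqrt_integral_sq (hsqrt ha ha₀) (hsqrt hb hb₀)
    _ = √(∫ x, a x ∂μ) * √(∫ x, b x ∂μ) := by
        simp only [Real.sq_sqrt (ha₀ _), Real.sq_sqrt (hb₀ _)]

theorem deriv_mem_Icc_of_monotone_of_lipschitzWith_one {f : ℝ → ℝ} (hf : Monotone f)
    (hl : LipschitzWith 1 f) (x : ℝ) : deriv f x ∈ Icc 0 1 :=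
  ⟨hf.deriv_nonneg, (le_abs_self _).trans (by simpa using norm_deriv_le_of_lipschitz (x₀ := x) hl)⟩

namespace IsCopula

variable {C : ℝ → ℝ → ℝ}

theorem flip (hC : IsCopula C) : IsCopula (fun u v => C v u) := by
  obtain ⟨hrange, hbot, hleft, hrect⟩ := hC
  refine ⟨fun u hu v hv => hrange v hv u hu, hleft, hbot, ?_⟩
  intro u₁ hu₁ u₂ hu₂ v₁ hv₁ v₂ hv₂ hu hv
  linarith [hrect v₁ hv₁ v₂ hv₂ u₁ hu₁ u₂ hu₂ hv hu]

theorem monotoneOn_left_s1 (hC : IsCopula C) {v : ℝ} (hv : v ∈ Icc (0 : ℝ) 1) :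
    MonotoneOn (C · v) (Icc 0 1) := by
  intro u₁ hu₁ u₂ hu₂ hu
  have := hC.2.2.2 u₁ hu₁ u₂ hu₂ 0 (by simp) v hv hu hv.1
  linarith [(hC.2.1 u₁ hu₁).1, (hC.2.1 u₂ hu₂).1]

theorem sub_le_sub_left_s1 {u₁ u₂ v : ℝ} (hC : IsCopula C) (hu₁ : u₁ ∈ Icc (0 : ℝ) 1)
    (hu₂ : u₂ ∈ Icc (0 : ℝ) 1) (hv : v ∈ Icc (0 : ℝ) 1) (hu : u₁ ≤ u₂) :
    C u₂ v - C u₁ v ≤ u₂ - u₁ := by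
  have := hC.2.2.2 u₁ hu₁ u₂ hu₂ v hv 1 (by simp) hu hv.2
  linarith [(hC.2.1 u₁ hu₁).2, (hC.2.1 u₂ hu₂).2]

theorem lipschitzOnWith_left_s1 (hC : IsCopula C) {v : ℝ} (hv : v ∈ Icc (0 : ℝ) 1) :
    LipschitzOnWith 1 (C · v) (Icc 0 1) := by
  refine LipschitzOnWith.of_dist_le_mul fun u₁ hu₁ u₂ hu₂ => ?_
  rw [NNReal.coe_one, one_mul, Real.dist_eq, Real.dist_eq]
  rcases le_total u₁ u₂ with hu | hu
  · rw [abs_sub_comm, abs_of_nonneg (sub_nonneg.2 (hC.monotoneOn_left_s1 hv hu₁ hu₂ hu)),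
      abs_sub_comm, abs_of_nonneg (sub_nonneg.2 hu)]
    exact hC.sub_le_sub_left_s1 hu₁ hu₂ hv hu
  · rw [abs_of_nonneg (sub_nonneg.2 (hC.monotoneOn_left_s1 hv hu₂ hu₁ hu)),
      abs_of_nonneg (sub_nonneg.2 hu)]
    exact hC.sub_le_sub_left_s1 hu₂ hu₁ hv hu

end IsCopula

/- A copula is only constrained on the unit square. Clamping both arguments into `[0, 1]`
makes every horizontal slice monotone and `1`-Lipschitz on all of `ℝ` and the function jointly
continuous, which is what makes its partial derivative bounded and jointly measurable. -/
def extendUnitSquare (C : ℝ → ℝ → ℝ) (u v : ℝ) : ℝ :=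
  C (projIcc 0 1 zero_le_one u) (projIcc 0 1 zero_le_one v)

section extendUnitSquare

variable {C : ℝ → ℝ → ℝ}

theorem extendUnitSquare_of_mem {u v : ℝ} (hu : u ∈ Icc (0 : ℝ) 1) (hv : v ∈ Icc (0 : ℝ) 1) :
    extendUnitSquare C u v = C u v := by
  simp [extendUnitSquare, projIcc_of_mem _ hu, projIcc_of_mem _ hv]

theorem extendUnitSquare_zero_left (hC : IsCopula C) (v : ℝ) : extendUnitSquare C 0 v = 0 := by
  simpa [extendUnitSquare] using (hC.2.2.1 _ (projIcc 0 1 zero_le_one v).2).1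

theorem extendUnitSquare_one_left (hC : IsCopula C) {v : ℝ} (hv : v ∈ Icc (0 : ℝ) 1) :
    extendUnitSquare C 1 v = v := by
  simpa [extendUnitSquare, projIcc_of_mem _ hv] using (hC.2.2.1 v hv).2

theorem monotone_extendUnitSquare_left (hC : IsCopula C) (v : ℝ) :
    Monotone (extendUnitSquare C · v) := fun _ _ hu =>
  hC.monotoneOn_left_s1 (projIcc 0 1 zero_le_one v).2 (projIcc 0 1 _ _).2 (projIcc 0 1 _ _).2
    (monotone_projIcc _ hu)

theorem lipschitzWith_extendUnitSquare_left (hC : IsCopula C) (v : ℝ) :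
    LipschitzWith 1 (extendUnitSquare C · v) := by
  have := (hC.lipschitzOnWith_left_s1 (projIcc 0 1 zero_le_one v).2).to_restrict.comp
    (LipschitzWith.projIcc zero_le_one)
  rwa [mul_one] at this

theorem continuous_extendUnitSquare (hC : IsCopula C) :
    Continuous (Function.uncurry (extendUnitSquare C)) :=
  continuous_prod_of_continuous_lipschitzWith _ 1
    (fun u => (lipschitzWith_extendUnitSquare_left hC.flip u).continuous)
    (lipschitzWith_extendUnitSquare_left hC)

theorem continuous_extendUnitSquare_diag (hC : IsCopula C) :
    Continuous fun v => extendUnitSquare C v v :=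
  (continuous_extendUnitSquare hC).comp (continuous_id.prodMk continuous_id)

end extendUnitSquare

instance isProbabilityMeasure_restrict_Ioc_zero_one :
    IsProbabilityMeasure (volume.restrict (Ioc (0 : ℝ) 1)) :=
  ⟨by simp⟩

local notation "𝕀" => volume.restrict (Ioc (0 : ℝ) 1)

theorem measureReal_restrict_Ioc_zero_one_Iic {v : ℝ} (hv : v ∈ Icc (0 : ℝ) 1) :
    (𝕀).real (Iic v) = v := by
  simp [Iic_inter_Ioc_of_le hv.2, hv.1]

theorem memLp_indicator_Iic (v : ℝ) : MemLp ((Iic v).indicator (1 : ℝ → ℝ)) 2 𝕀 :=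
  memLp_indicator_const 2 measurableSet_Iic (1 : ℝ) (.inr (measure_ne_top _ _))

theorem integral_sq_restrict_Ioc_zero_one : ∫ v, v ^ 2 ∂𝕀 = 1 / 3 := by
  rw [← intervalIntegral.integral_of_le zero_le_one, integral_pow]
  norm_num

theorem variance_indicator_Iic {v : ℝ} (hv : v ∈ Icc (0 : ℝ) 1) :
    Var[(Iic v).indicator 1; 𝕀] = v * (1 - v) := by
  have hsq : (Iic v).indicator (1 : ℝ → ℝ) ^ 2 = (Iic v).indicator 1 := by
    ext t; by_cases ht : t ∈ Iic v <;> simp [ht]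
  rw [variance_eq_sub (memLp_indicator_Iic v), hsq, integral_indicator_one measurableSet_Iic,
    measureReal_restrict_Ioc_zero_one_Iic hv]
  ring

theorem integrable_variance_indicator_Iic :
    Integrable (fun v => Var[(Iic v).indicator (1 : ℝ → ℝ); 𝕀]) 𝕀 :=
  (by fun_prop : Continuous fun v : ℝ => v * (1 - v)).integrableOn_Ioc.congr_fun
    (fun _ hv => (variance_indicator_Iic (Ioc_subset_Icc_self hv)).symm) measurableSet_Ioc

theorem integral_variance_indicator_Iic :
    ∫ v, Var[(Iic v).indicator (1 : ℝ → ℝ); 𝕀] ∂𝕀 = 1 / 6 := by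
  rw [setIntegral_congr_fun measurableSet_Ioc
    (fun _ hv => variance_indicator_Iic (Ioc_subset_Icc_self hv)),
    ← intervalIntegral.integral_of_le zero_le_one]
  simp only [mul_sub, mul_one, ← sq]
  rw [intervalIntegral.integral_sub (continuous_id'.intervalIntegrable _ _)
    ((continuous_pow 2).intervalIntegrable _ _), integral_id, integral_pow]
  norm_num

def sliceDeriv (C : ℝ → ℝ → ℝ) (v t : ℝ) : ℝ := d1 (extendUnitSquare C) t v

section sliceDeriv

variable {C : ℝ → ℝ → ℝ}

theorem sliceDeriv_mem_Icc (hC : IsCopula C) (v t : ℝ) : sliceDeriv C v t ∈ Icc 0 1 :=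
  deriv_mem_Icc_of_monotone_of_lipschitzWith_one (monotone_extendUnitSquare_left hC v)
    (lipschitzWith_extendUnitSquare_left hC v) t

theorem measurable_uncurry_sliceDeriv (hC : IsCopula C) :
    Measurable (Function.uncurry (sliceDeriv C)) :=
  measurable_deriv_with_param (f := fun v s => extendUnitSquare C s v)
    (continuous_extendUnitSquare hC.flip)

theorem memLp_sliceDeriv (hC : IsCopula C) (v : ℝ) (p : ℝ≥0∞) : MemLp (sliceDeriv C v) p 𝕀 :=
  MemLp.of_bound (measurable_deriv _).aestronglyMeasurable 1 <| ae_of_all _ fun t => by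
    have := sliceDeriv_mem_Icc hC v t
    rw [Real.norm_eq_abs, abs_le]
    constructor <;> linarith [this.1, this.2]

theorem setIntegral_sliceDeriv_Ioc (hC : IsCopula C) (v : ℝ) {x : ℝ} (hx : 0 ≤ x) :
    ∫ t in Ioc 0 x, sliceDeriv C v t = extendUnitSquare C x v := by
  change ∫ t in Ioc 0 x, deriv (extendUnitSquare C · v) t = _
  rw [← intervalIntegral.integral_of_le hx, (lipschitzWith_extendUnitSquare_left hC v)
    |>.lipschitzOnWith.absolutelyContinuousOnInterval.integral_deriv_eq_sub,
    extendUnitSquare_zero_left hC, sub_zero]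

theorem integral_sliceDeriv (hC : IsCopula C) {v : ℝ} (hv : v ∈ Icc (0 : ℝ) 1) :
    ∫ t, sliceDeriv C v t ∂𝕀 = v := by
  rw [setIntegral_sliceDeriv_Ioc hC v zero_le_one, extendUnitSquare_one_left hC hv]

theorem variance_sliceDeriv (hC : IsCopula C) {v : ℝ} (hv : v ∈ Icc (0 : ℝ) 1) :
    Var[sliceDeriv C v; 𝕀] = ∫ t, sliceDeriv C v t ^ 2 ∂𝕀 - v ^ 2 := by
  rw [variance_eq_sub (memLp_sliceDeriv hC v 2), integral_sliceDeriv hC hv]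
  rfl

theorem covariance_indicator_Iic_sliceDeriv (hC : IsCopula C) {v : ℝ}
    (hv : v ∈ Icc (0 : ℝ) 1) :
    cov[(Iic v).indicator 1, sliceDeriv C v; 𝕀] = extendUnitSquare C v v - v ^ 2 := by
  have hmul : (Iic v).indicator 1 * sliceDeriv C v = (Iic v).indicator (sliceDeriv C v) := by
    ext t; by_cases ht : t ∈ Iic v <;> simp [ht]
  rw [covariance_eq_sub (memLp_indicator_Iic v) (memLp_sliceDeriv hC v 2), hmul,
    integral_indicator measurableSet_Iic, Measure.restrict_restrict measurableSet_Iic,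
    Iic_inter_Ioc_of_le hv.2, setIntegral_sliceDeriv_Ioc hC v hv.1,
    integral_indicator_one measurableSet_Iic, measureReal_restrict_Ioc_zero_one_Iic hv,
    integral_sliceDeriv hC hv, sq]

theorem extendUnitSquare_diag_sub_sq_le (hC : IsCopula C) {v : ℝ} (hv : v ∈ Icc (0 : ℝ) 1) :
    extendUnitSquare C v v - v ^ 2 ≤
      √Var[(Iic v).indicator 1; 𝕀] * √Var[sliceDeriv C v; 𝕀] := by
  rw [← covariance_indicator_Iic_sliceDeriv hC hv]
  exact covariance_le_sqrt_variance_mul_sqrt_variance (memLp_indicator_Iic v)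
    (memLp_sliceDeriv hC v 2)

theorem integrable_variance_sliceDeriv (hC : IsCopula C) :
    Integrable (fun v => Var[sliceDeriv C v; 𝕀]) 𝕀 := by
  have hD := measurable_uncurry_sliceDeriv hC
  have hmeas : Measurable fun v => Var[sliceDeriv C v; 𝕀] := by
    simp_rw [variance_eq_sub (memLp_sliceDeriv hC _ 2)]
    exact ((hD.pow_const 2).stronglyMeasurable.integral_prod_right' (ν := 𝕀)).measurable.sub
      ((hD.stronglyMeasurable.integral_prod_right' (ν := 𝕀)).measurable.pow_const 2)
  refine Integrable.of_bound hmeas.aestronglyMeasurable (((1 - 0) / 2) ^ 2)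
    (ae_of_all _ fun v => ?_)
  rw [Real.norm_of_nonneg (variance_nonneg _ _)]
  exact variance_le_sq_of_bounded (ae_of_all _ (sliceDeriv_mem_Icc hC v))
    (measurable_deriv _).aemeasurable

theorem d1_eq_sliceDeriv {t v : ℝ} (ht : t ∈ Ioo (0 : ℝ) 1) (hv : v ∈ Icc (0 : ℝ) 1) :
    d1 C t v = sliceDeriv C v t := by
  refine Filter.EventuallyEq.deriv_eq ?_
  filter_upwards [Ioo_mem_nhds ht.1 ht.2] with s hs
  rw [extendUnitSquare_of_mem (Ioo_subset_Icc_self hs) hv]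

theorem xi_eq_integral_variance_sliceDeriv (hC : IsCopula C) :
    xi C = 6 * ∫ v, Var[sliceDeriv C v; 𝕀] ∂𝕀 := by
  have hinner : ∀ v ∈ Ioc (0 : ℝ) 1,
      ∫ t in (0 : ℝ)..1, d1 C t v ^ 2 = Var[sliceDeriv C v; 𝕀] + v ^ 2 := by
    intro v hv
    rw [variance_sliceDeriv hC (Ioc_subset_Icc_self hv), sub_add_cancel,
      intervalIntegral.integral_of_le zero_le_one, ← Measure.restrict_congr_set Ioo_ae_eq_Ioc]
    exact setIntegral_congr_fun measurableSet_Ioo fun t ht => by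
      rw [d1_eq_sliceDeriv ht (Ioc_subset_Icc_self hv)]
  rw [xi, intervalIntegral.integral_of_le zero_le_one,
    setIntegral_congr_fun measurableSet_Ioc hinner,
    integral_add (integrable_variance_sliceDeriv hC) (continuous_pow 2).integrableOn_Ioc,
    integral_sq_restrict_Ioc_zero_one]
  ring

theorem psi_eq_integral_extendUnitSquare_diag_sub_sq (hC : IsCopula C) :
    psi C = 6 * ∫ v, (extendUnitSquare C v v - v ^ 2) ∂𝕀 := by
  have hint : ∫ v in (0 : ℝ)..1, C v v = ∫ v, extendUnitSquare C v v ∂𝕀 := by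
    rw [intervalIntegral.integral_of_le zero_le_one]
    exact setIntegral_congr_fun measurableSet_Ioc fun v hv =>
      (extendUnitSquare_of_mem (Ioc_subset_Icc_self hv) (Ioc_subset_Icc_self hv)).symm
  rw [psi, hint, integral_sub (continuous_extendUnitSquare_diag hC).integrableOn_Ioc
    (continuous_pow 2).integrableOn_Ioc, integral_sq_restrict_Ioc_zero_one]
  ring

end sliceDeriv

/-- For every bivariate copula `C`, `0 ≤ ξ(C)` and `ψ(C) ≤ √(ξ(C))`. -/
theorem xi_nonneg_and_psi_le_sqrt_xi (C : ℝ → ℝ → ℝ) (hC : IsCopula C) :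
    0 ≤ xi C ∧ psi C ≤ Real.sqrt (xi C) := by
  have hxi := xi_eq_integral_variance_sliceDeriv hC
  refine ⟨hxi ▸ mul_nonneg (by norm_num) (integral_nonneg fun v => variance_nonneg _ _), ?_⟩
  calc psi C = 6 * ∫ v, (extendUnitSquare C v v - v ^ 2) ∂𝕀 :=
        psi_eq_integral_extendUnitSquare_diag_sub_sq hC
    _ ≤ 6 * (√(∫ v, Var[(Iic v).indicator (1 : ℝ → ℝ); 𝕀] ∂𝕀) *
          √(∫ v, Var[sliceDeriv C v; 𝕀] ∂𝕀)) := by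
        gcongr
        exact integral_le_sqrt_integral_mul_sqrt_integral
          ((continuous_extendUnitSquare_diag hC).sub (continuous_pow 2)).integrableOn_Ioc
          integrable_variance_indicator_Iic (integrable_variance_sliceDeriv hC)
          (fun _ => variance_nonneg _ _) (fun _ => variance_nonneg _ _)
          ((ae_restrict_mem measurableSet_Ioc).mono
            fun v hv => extendUnitSquare_diag_sub_sq_le hC (Ioc_subset_Icc_self hv))
    _ = 6 * √(1 / 6 * (xi C / 6)) := by
        rw [integral_variance_indicator_Iic, hxi, ← Real.sqrt_mul (by norm_num)]
        ring_nf
    _ = √(xi C) := by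
        rw [show 1 / 6 * (xi C / 6) = xi C / 6 ^ 2 by ring, Real.sqrt_div' _ (by norm_num),
          Real.sqrt_sq (by norm_num)]
        ring
end
end

section
/- For every α ∈ (0,1], the ordinal sum C_α of the independence copula Π on the interval (0,α), defined by C_α(u,v) = uv/α for (u,v) ∈ (0,α)² and C_α(u,v) = min(u,v) otherwise, is a stochastically increasing bivariate copula satisfying ξ(C_α) = ψ(C_α) = 1 − α². -/
open MeasureTheory Set

noncomputable section

/-- The ordinal sum of the independence copula `Π` on the interval `(0,α)`. -/
def ordinalSumPi (α : ℝ) (u v : ℝ) : ℝ :=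
  if u ∈ Ioo (0:ℝ) α ∧ v ∈ Ioo (0:ℝ) α then u * v / α else min u v

/-! On `[0,∞)²` the ordinal sum splits as
`C_α(u,v) = min((u-α)⁺, (v-α)⁺) + min(u,α) · min(v,α) / α`,
a sum of two 2-increasing functions. For fixed `v`, `t ↦ ∂₁C_α(t,v)` is the step function
`min(v/α, 1) · 𝟙[t ≤ max(α,v)]`, which is non-increasing and satisfies
`∫₀¹ (∂₁C_α(t,v))² dt = max(α,v) · min(v/α,1)² = C_α(v,v)`. Hence `ξ(C_α) = ψ(C_α)`, and
`∫₀¹ C_α(v,v) dv = ∫₀^α v²/α dv + ∫_α^1 v dv = 1/2 - α²/6`. -/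

lemma min_add_min_le_min_add_min {a₁ a₂ b₁ b₂ : ℝ} (ha : a₁ ≤ a₂) (hb : b₁ ≤ b₂) :
    min a₁ b₂ + min a₂ b₁ ≤ min a₂ b₂ + min a₁ b₁ := by
  simp only [min_def]; split_ifs <;> linarith

lemma antitone_indicator_Iic {β : Type*} [Preorder β] {m : β} {c : ℝ} (hc : 0 ≤ c) :
    Antitone ((Iic m).indicator fun _ => c) := by
  intro x y hxy
  by_cases hy : y ≤ m
  · simp [hy, hxy.trans hy]
  · simp [indicator_of_notMem (show y ∉ Iic m from hy), indicator_nonneg (fun _ _ => hc)]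

lemma integral_sq_indicator_Iic {a b m : ℝ} (hm : m ∈ Icc a b) (c : ℝ) :
    ∫ t in a..b, ((Iic m).indicator (fun _ => c) t) ^ 2 = (m - a) * c ^ 2 := by
  have hsq : ∀ t, ((Iic m).indicator (fun _ => c) t) ^ 2 = (Iic m).indicator (fun _ => c ^ 2) t :=
    fun t => by by_cases ht : t ≤ m <;> simp [ht]
  simp_rw [hsq]
  rw [← Iic_def, intervalIntegral.integral_indicator hm, intervalIntegral.integral_const,
    smul_eq_mul]

open Topology

namespace ordinalSumPi

variable {α u v : ℝ}

lemma eq_mul_div (hα : 0 < α) (hu : u ∈ Icc 0 α) (hv : v ∈ Icc 0 α) :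
    ordinalSumPi α u v = u * v / α := by
  by_cases h : u ∈ Ioo 0 α ∧ v ∈ Ioo 0 α
  · simp [ordinalSumPi, h]
  have hboundary : u = 0 ∨ u = α ∨ v = 0 ∨ v = α := by
    simp only [mem_Ioo, mem_Icc] at h hu hv
    by_contra! h'
    exact h ⟨⟨lt_of_le_of_ne hu.1 h'.1.symm, lt_of_le_of_ne hu.2 h'.2.1⟩,
      lt_of_le_of_ne hv.1 h'.2.2.1.symm, lt_of_le_of_ne hv.2 h'.2.2.2⟩
  rw [ordinalSumPi, if_neg h]
  rcases hboundary with rfl | rfl | rfl | rfl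
  · simp [hv.1]
  · field_simp; exact min_eq_right hv.2
  · simp [hu.1]
  · field_simp; exact min_eq_left hu.2

lemma eq_min_of_le_left (hu : α ≤ u) : ordinalSumPi α u v = min u v := by
  simp [ordinalSumPi, hu.not_gt]

lemma eq_min_of_le_right (hv : α ≤ v) : ordinalSumPi α u v = min u v := by
  simp [ordinalSumPi, hv.not_gt]

lemma eq_min_add_mul_div (hα : 0 < α) (hu : 0 ≤ u) (hv : 0 ≤ v) :
    ordinalSumPi α u v = min (max (u - α) 0) (max (v - α) 0) + min u α * min v α / α := by
  rcases le_total u α with huα | huα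
  · rcases le_total v α with hvα | hvα
    · rw [eq_mul_div hα ⟨hu, huα⟩ ⟨hv, hvα⟩, min_eq_left huα, min_eq_left hvα,
        max_eq_right (by linarith), max_eq_right (by linarith), min_self, zero_add]
    · rw [eq_min_of_le_right hvα, min_eq_left (huα.trans hvα), max_eq_right (by linarith),
        max_eq_left (sub_nonneg.2 hvα), min_eq_left (sub_nonneg.2 hvα), min_eq_left huα,
        min_eq_right hvα, mul_div_cancel_right₀ _ hα.ne', zero_add]
  · rw [eq_min_of_le_left huα, max_eq_left (sub_nonneg.2 huα), min_eq_right huα,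
      mul_div_cancel_left₀ _ hα.ne']
    simp only [min_def, max_def]; split_ifs <;> linarith

lemma rect_nonneg (hα : 0 < α) {u₁ u₂ v₁ v₂ : ℝ} (hu₁ : 0 ≤ u₁) (hv₁ : 0 ≤ v₁) (hu : u₁ ≤ u₂)
    (hv : v₁ ≤ v₂) :
    0 ≤ ordinalSumPi α u₂ v₂ - ordinalSumPi α u₁ v₂ - ordinalSumPi α u₂ v₁ +
      ordinalSumPi α u₁ v₁ := by
  rw [eq_min_add_mul_div hα (hu₁.trans hu) (hv₁.trans hv), eq_min_add_mul_div hα hu₁ (hv₁.trans hv),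
    eq_min_add_mul_div hα (hu₁.trans hu) hv₁, eq_min_add_mul_div hα hu₁ hv₁]
  have hM := min_add_min_le_min_add_min (max_le_max_right 0 (sub_le_sub_right hu α))
    (max_le_max_right 0 (sub_le_sub_right hv α))
  have hprod : 0 ≤ (min u₂ α - min u₁ α) * (min v₂ α - min v₁ α) / α :=
    div_nonneg (mul_nonneg (sub_nonneg.2 (min_le_min_right α hu))
      (sub_nonneg.2 (min_le_min_right α hv))) hα.le
  have hprod_expand : (min u₂ α - min u₁ α) * (min v₂ α - min v₁ α) / α = min u₂ α * min v₂ α / α -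
      min u₁ α * min v₂ α / α - min u₂ α * min v₁ α / α + min u₁ α * min v₁ α / α := by ring
  linarith

lemma isCopula (hα : 0 < α) (hα1 : α ≤ 1) : IsCopula (ordinalSumPi α) := by
  have zero_left : ∀ v, 0 ≤ v → ordinalSumPi α 0 v = 0 := fun v hv => by
    simp [ordinalSumPi, hv]
  have zero_right : ∀ u, 0 ≤ u → ordinalSumPi α u 0 = 0 := fun u hu => by
    simp [ordinalSumPi, hu]
  have one_left : ∀ v, v ≤ 1 → ordinalSumPi α 1 v = v := fun v hv => by
    rw [eq_min_of_le_left hα1, min_eq_right hv]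
  have one_right : ∀ u, u ≤ 1 → ordinalSumPi α u 1 = u := fun u hu => by
    rw [eq_min_of_le_right hα1, min_eq_left hu]
  refine ⟨fun u hu v hv => ⟨?_, ?_⟩, fun u hu => ⟨zero_right u hu.1, one_right u hu.2⟩,
    fun v hv => ⟨zero_left v hv.1, one_left v hv.2⟩,
    fun u₁ hu₁ u₂ _ v₁ hv₁ v₂ _ hu hv => rect_nonneg hα hu₁.1 hv₁.1 hu hv⟩
  · have := rect_nonneg hα le_rfl le_rfl hu.1 hv.1
    rw [zero_left v hv.1, zero_right u hu.1, zero_left 0 le_rfl] at this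
    linarith
  · have := rect_nonneg hα le_rfl hv.1 hu.1 hv.2
    rw [zero_left v hv.1, zero_left 1 zero_le_one, one_right u hu.2] at this
    linarith [hu.2]

lemma hasDerivAt_indicator (hα : 0 < α) (hv : 0 ≤ v) {t : ℝ} (ht : 0 < t) (htm : t ≠ max α v) :
    HasDerivAt (fun s => ordinalSumPi α s v)
      ((Iic (max α v)).indicator (fun _ => min (v / α) 1) t) t := by
  rcases htm.lt_or_gt with hlt | hgt
  · rw [indicator_of_mem (mem_Iic.2 hlt.le)]
    rcases lt_or_ge v α with hvα | hvα
    · rw [max_eq_left hvα.le] at hlt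
      rw [min_eq_left ((div_le_one hα).2 hvα.le)]
      have hC : (fun s => ordinalSumPi α s v) =ᶠ[𝓝 t] fun s => s * (v / α) := by
        filter_upwards [Ioo_mem_nhds ht hlt] with s hs
        rw [eq_mul_div hα (Ioo_subset_Icc_self hs) ⟨hv, hvα.le⟩, mul_div_assoc]
      simpa using ((hasDerivAt_id t).mul_const (v / α)).congr_of_eventuallyEq hC
    · rw [max_eq_right hvα] at hlt
      rw [min_eq_right ((one_le_div hα).2 hvα)]
      have hC : (fun s => ordinalSumPi α s v) =ᶠ[𝓝 t] fun s => s := by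
        filter_upwards [Iio_mem_nhds hlt] with s hs
        rw [eq_min_of_le_right hvα, min_eq_left hs.le]
      exact (hasDerivAt_id t).congr_of_eventuallyEq hC
  · rw [indicator_of_notMem (notMem_Iic.2 hgt)]
    have hC : (fun s => ordinalSumPi α s v) =ᶠ[𝓝 t] fun _ => v := by
      filter_upwards [Ioi_mem_nhds hgt] with s hs
      rw [eq_min_of_le_left ((le_max_left α v).trans hs.le),
        min_eq_right ((le_max_right α v).trans hs.le)]
    exact (hasDerivAt_const t v).congr_of_eventuallyEq hC

lemma ae_d1_eq_indicator (hα : 0 < α) (hv : 0 ≤ v) :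
    ∀ᵐ t, 0 < t →
      d1 (ordinalSumPi α) t v = (Iic (max α v)).indicator (fun _ => min (v / α) 1) t := by
  filter_upwards [volume.ae_ne (max α v)] with t htm ht
  exact (hasDerivAt_indicator hα hv ht htm).deriv

lemma isSI (hα : 0 < α) : IsSI (ordinalSumPi α) := fun v hv =>
  ⟨(Iic (max α v)).indicator fun _ => min (v / α) 1,
    (antitone_indicator_Iic (le_min (div_nonneg hv.1 hα.le) zero_le_one)).antitoneOn _, by
    filter_upwards [ae_restrict_of_ae (ae_d1_eq_indicator hα hv.1),
      ae_restrict_of_ae (volume.ae_ne 0), ae_restrict_mem measurableSet_Icc] with t hd1 ht0 ht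
    exact hd1 (lt_of_le_of_ne ht.1 ht0.symm)⟩

lemma integral_sq_d1_eq_diag (hα : 0 < α) (hα1 : α ≤ 1) (hv : v ∈ Icc 0 1) :
    ∫ t in (0:ℝ)..1, d1 (ordinalSumPi α) t v ^ 2 = ordinalSumPi α v v := calc
  _ = ∫ t in (0:ℝ)..1, ((Iic (max α v)).indicator (fun _ => min (v / α) 1) t) ^ 2 := by
    refine intervalIntegral.integral_congr_ae ?_
    filter_upwards [ae_d1_eq_indicator hα hv.1] with t hd1 ht
    rw [uIoc_of_le zero_le_one] at ht
    rw [hd1 ht.1]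
  _ = max α v * min (v / α) 1 ^ 2 := by
    rw [integral_sq_indicator_Iic ⟨hα.le.trans (le_max_left α v), max_le hα1 hv.2⟩, sub_zero]
  _ = ordinalSumPi α v v := by
    rcases le_total v α with hvα | hvα
    · rw [eq_mul_div hα ⟨hv.1, hvα⟩ ⟨hv.1, hvα⟩, max_eq_left hvα,
        min_eq_left ((div_le_one hα).2 hvα)]
      field_simp
    · rw [eq_min_of_le_left hvα, max_eq_right hvα, min_eq_right ((one_le_div hα).2 hvα),
        min_self, one_pow, mul_one]

lemma xi_eq_psi (hα : 0 < α) (hα1 : α ≤ 1) : xi (ordinalSumPi α) = psi (ordinalSumPi α) := by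
  rw [xi, psi, intervalIntegral.integral_congr fun v hv => ?_]
  rw [uIcc_of_le zero_le_one] at hv
  exact integral_sq_d1_eq_diag hα hα1 hv

lemma psi_eq_one_sub_sq (hα : 0 < α) (hα1 : α ≤ 1) : psi (ordinalSumPi α) = 1 - α ^ 2 := by
  have h_lower : EqOn (fun v => ordinalSumPi α v v) (fun v => v ^ 2 / α) (uIcc 0 α) := by
    intro v hv
    rw [uIcc_of_le hα.le] at hv
    simp only [eq_mul_div hα hv hv, sq]
  have h_upper : EqOn (fun v => ordinalSumPi α v v) (fun v => v) (uIcc α 1) := by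
    intro v hv
    rw [uIcc_of_le hα1] at hv
    exact (eq_min_of_le_left hv.1).trans (min_self v)
  have hint_lower : IntervalIntegrable (fun v => ordinalSumPi α v v) volume 0 α :=
    (intervalIntegrable_congr (h_lower.mono uIoc_subset_uIcc)).2
      ((by fun_prop : Continuous fun v : ℝ => v ^ 2 / α).intervalIntegrable 0 α)
  have hint_upper : IntervalIntegrable (fun v => ordinalSumPi α v v) volume α 1 :=
    (intervalIntegrable_congr (h_upper.mono uIoc_subset_uIcc)).2
      intervalIntegral.intervalIntegrable_id
  rw [psi, ← intervalIntegral.integral_add_adjacent_intervals hint_lower hint_upper,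
    intervalIntegral.integral_congr h_lower, intervalIntegral.integral_congr h_upper,
    intervalIntegral.integral_div, integral_pow, integral_id]
  field_simp
  ring

end ordinalSumPi

/-- For `α ∈ (0,1]`, the ordinal sum of `Π` on `(0,α)` is a stochastically
increasing bivariate copula with `ξ = ψ = 1 - α²`. -/
theorem ordinalSumPi_xi_eq_psi (α : ℝ) (hα : α ∈ Ioc (0:ℝ) 1) :
    IsCopula (ordinalSumPi α) ∧ IsSI (ordinalSumPi α) ∧
    xi (ordinalSumPi α) = 1 - α ^ 2 ∧ psi (ordinalSumPi α) = 1 - α ^ 2 := by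
  obtain ⟨hα0, hα1⟩ := hα
  have hpsi := ordinalSumPi.psi_eq_one_sub_sq hα0 hα1
  exact ⟨ordinalSumPi.isCopula hα0 hα1, ordinalSumPi.isSI hα0,
    (ordinalSumPi.xi_eq_psi hα0 hα1).trans hpsi, hpsi⟩
end
end
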